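/- arXiv:1804.07246 — 3 statements merged into one kernel-verified Lean document; each statement's English description precedes it below -/
import Mathlib

section
/- For α ∈ (1, 2] and every positive integer p, the coefficient c_p^α = (-1)^p Γ(α+1)/(Γ(α/2 - p + 1) Γ(α/2 + p + 1)) is nonpositive. -/
/-!
Writing `p = n + 1`, the factors `Γ(α + 1)` and `Γ(α/2 + p + 1)` are positive, so the sign of `c_p^α`
is that of `-(-1)^n / Γ(α/2 - n)`. With `t = α/2 ∈ (0, 1]`, the recursion `Γ(s) = Γ(s + 1) / s` shows
by induction on `n` that `(-1)^n Γ(t - n) ≥ 0`: each step divides by the negative number `t - n - 1`.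
-/

/-- The fractional difference coefficients `c_p^α`. -/
noncomputable def c (α : ℝ) (p : ℤ) : ℝ :=
  (-1 : ℝ) ^ p * Real.Gamma (α + 1) /
    (Real.Gamma (α / 2 - p + 1) * Real.Gamma (α / 2 + p + 1))

namespace Real

/-- Also true at `s = 0`, where both sides vanish. -/
theorem Gamma_eq_Gamma_add_one_div (s : ℝ) : Gamma s = Gamma (s + 1) / s := by
  rcases eq_or_ne s 0 with rfl | hs
  · simp [Gamma_zero]
  · rw [Gamma_add_one hs, mul_div_cancel_left₀ _ hs]

theorem neg_one_pow_mul_Gamma_sub_natCast_nonneg {t : ℝ} (ht₀ : 0 < t) (ht₁ : t ≤ 1) (n : ℕ) :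
    0 ≤ (-1) ^ n * Gamma (t - n) := by
  induction n with
  | zero => simpa using (Gamma_pos_of_pos ht₀).le
  | succ n ih =>
    have hstep : (-1) ^ (n + 1) * Gamma (t - ↑(n + 1)) =
        (-1) ^ n * Gamma (t - n) / (n + 1 - t) := by
      rw [Gamma_eq_Gamma_add_one_div, show t - ↑(n + 1) + 1 = t - n by push_cast; ring,
        show t - ↑(n + 1) = -(n + 1 - t) by push_cast; ring, div_neg, pow_succ]
      ring
    rw [hstep]
    exact div_nonneg ih (by linarith)

end Real

open Real

theorem c_natCast_add_one (α : ℝ) (n : ℕ) :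
    c α (n + 1) = -(Gamma (α + 1) / ((-1) ^ n * Gamma (α / 2 - n) * Gamma (α / 2 + n + 2))) := by
  have hsign : ((-1 : ℝ) ^ n)⁻¹ = (-1) ^ n := by
    rw [← inv_pow, inv_neg, inv_one]
  rw [c, zpow_add_one₀ (by norm_num), zpow_natCast,
    show α / 2 - ((n + 1 : ℤ) : ℝ) + 1 = α / 2 - n by push_cast; ring,
    show α / 2 + ((n + 1 : ℤ) : ℝ) + 1 = α / 2 + n + 2 by push_cast; ring]
  simp only [div_eq_mul_inv, mul_inv, hsign]
  ring

theorem stmt_3 (α : ℝ) (hα : α ∈ Set.Ioc (1 : ℝ) 2) (p : ℤ) (hp : 1 ≤ p) :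
    c α p ≤ 0 := by
  obtain ⟨hα₁, hα₂⟩ := hα
  obtain ⟨n, rfl⟩ : ∃ n : ℕ, p = n + 1 := ⟨(p - 1).toNat, by omega⟩
  have hsign : 0 ≤ (-1) ^ n * Gamma (α / 2 - n) :=
    neg_one_pow_mul_Gamma_sub_natCast_nonneg (by linarith) (by linarith) n
  have hnum : 0 < Gamma (α + 1) := Gamma_pos_of_pos (by linarith)
  have hden : 0 < Gamma (α / 2 + n + 2) := Gamma_pos_of_pos (by positivity)
  rw [c_natCast_add_one, neg_nonpos]
  exact div_nonneg hnum.le (mul_nonneg hsign hden.le)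
end

section
/- Let u⁰ be a real number with |u⁰| > 1 and Δt > 0, and define u¹ = u⁰ / sqrt((u⁰)² + (1 - (u⁰)²) e^{-Δt}), assuming the quantity under the square root is positive. Then |u¹| ≤ |u⁰|. -/
lemma one_le_add_one_sub_mul {a c : ℝ} (ha : 1 ≤ a) (hc : c ≤ 1) : 1 ≤ a + (1 - a) * c := by
  nlinarith [mul_nonneg (sub_nonneg.2 ha) (sub_nonneg.2 hc)]

lemma abs_div_sqrt_le_abs (u : ℝ) {a : ℝ} (ha : 1 ≤ a) : |u / Real.sqrt a| ≤ |u| := by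
  rw [abs_div, abs_of_nonneg (Real.sqrt_nonneg a)]
  exact div_le_self (abs_nonneg u) (Real.one_le_sqrt.2 ha)

theorem stmt_7_general (u₀ Δt : ℝ) (hΔt : 0 < Δt) (h : 1 < |u₀|) :
    |u₀ / Real.sqrt (u₀ ^ 2 + (1 - u₀ ^ 2) * Real.exp (-Δt))| ≤ |u₀| := by
  have hu : 1 ≤ u₀ ^ 2 := (one_le_sq_iff_one_le_abs u₀).2 h.le
  have he : Real.exp (-Δt) ≤ 1 := Real.exp_le_one_iff.2 (neg_nonpos.2 hΔt.le)
  exact abs_div_sqrt_le_abs u₀ (one_le_add_one_sub_mul hu he)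

theorem stmt_7 (u₀ Δt : ℝ) (hΔt : 0 < Δt) (h : 1 < |u₀|)
    (hpos : 0 < u₀ ^ 2 + (1 - u₀ ^ 2) * Real.exp (-Δt)) :
    |u₀ / Real.sqrt (u₀ ^ 2 + (1 - u₀ ^ 2) * Real.exp (-Δt))| ≤ |u₀| :=
  stmt_7_general u₀ Δt hΔt h
end

section
/- For any real u⁰ and Δt > 0, with u¹ = u⁰ / sqrt((u⁰)² + (1 - (u⁰)²) e^{-Δt}), one has |u¹| ≤ max(|u⁰|, 1). -/
/-!
The radicand is `u₀² + (1 - u₀²) e` with `e = exp (-Δt) ∈ [0, 1]`, a convex combination of `u₀²`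
and `1`, so it is at least `min (u₀²) 1`. If `u₀² ≤ 1` this makes the quotient at most `1`;
otherwise the radicand is at least `1` and dividing by its square root cannot increase `|u₀|`.
-/

lemma min_le_add_sub_mul {a b t : ℝ} (ht₀ : 0 ≤ t) (ht₁ : t ≤ 1) :
    min a b ≤ a + (b - a) * t := by
  rcases le_total a b with hab | hba
  · exact (min_le_left a b).trans (le_add_of_nonneg_right (mul_nonneg (sub_nonneg.2 hab) ht₀))
  · rw [min_eq_right hba]
    nlinarith

lemma abs_div_sqrt_le_max_abs_one {x d : ℝ} (hd : min (x ^ 2) 1 ≤ d) :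
    |x / √d| ≤ max |x| 1 := by
  rw [abs_div, abs_of_nonneg (Real.sqrt_nonneg d)]
  rcases le_total (x ^ 2) 1 with hx | hx
  · rw [min_eq_left hx] at hd
    exact le_max_of_le_right (div_le_one_of_le₀ (Real.abs_le_sqrt hd) (Real.sqrt_nonneg d))
  · rw [min_eq_right hx] at hd
    exact le_max_of_le_left (div_le_self (abs_nonneg x) (Real.one_le_sqrt.2 hd))

theorem stmt_8 (u₀ Δt : ℝ) (hΔt : 0 < Δt) :
    |u₀ / Real.sqrt (u₀ ^ 2 + (1 - u₀ ^ 2) * Real.exp (-Δt))| ≤ max |u₀| 1 := by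
  have he₁ : Real.exp (-Δt) ≤ 1 := Real.exp_le_one_iff.2 (by linarith)
  exact abs_div_sqrt_le_max_abs_one (min_le_add_sub_mul (Real.exp_nonneg _) he₁)
end
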